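/- arXiv:1904.08712 — 3 statements merged into one kernel-verified Lean document; each statement's English description precedes it below -/
import Mathlib

section
/- Let (V_i, f_{ij}) be an inverse system of finite-dimensional vector spaces over a field, indexed by a directed set, in which all transition maps f_{ij} : V_j → V_i (i ≤ j) are surjective. Then for every index i the canonical projection lim V_j → V_i is surjective. -/
/-!
Dualize. The duals `(V j)^*` with the transposed maps form a direct system whose transition
maps are injective, so `(V i)^*` embeds into the direct limit `W`. Over a field the functional
"evaluate at `v`" on `(V i)^*` extends along this embedding to some `φ : W^*`. Since each `V j`
is finite-dimensional, `V j = (V j)^**`, so restricting `φ` to each `(V j)^*` gives a point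
`x j : V j`; compatibility of `x` is compatibility of the maps into `W`, and `x i = v` by the
choice of `φ`.
-/

open Module

theorem Module.DirectLimit.of_injective {R ι : Type*} [Semiring R] [Preorder ι]
    [IsDirectedOrder ι] [DecidableEq ι] {G : ι → Type*} [∀ i, AddCommMonoid (G i)]
    [∀ i, Module R (G i)] {g : ∀ i j, i ≤ j → G i →ₗ[R] G j}
    [DirectedSystem G (g · · ·)] (hg : ∀ i j h, Function.Injective (g i j h)) (i : ι) :
    Function.Injective (of R ι G g i) := fun _ _ hxy ↦
  have ⟨j, hij, hj⟩ := exists_eq_of_of_eq hxy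
  hg i j hij hj

section InverseSystem

variable {K ι : Type*} [Field K] [Preorder ι] {V : ι → Type*} [∀ i, AddCommGroup (V i)]
  [∀ i, Module K (V i)] (f : ∀ i j, i ≤ j → V j →ₗ[K] V i)

def dualSystem (i j : ι) (h : i ≤ j) : Dual K (V i) →ₗ[K] Dual K (V j) :=
  (f i j h).dualMap

theorem directedSystem_dualSystem (hf_id : ∀ i, f i i le_rfl = LinearMap.id)
    (hf_comp : ∀ i j k (hij : i ≤ j) (hjk : j ≤ k),
      (f i j hij).comp (f j k hjk) = f i k (hij.trans hjk)) :
    DirectedSystem (fun i ↦ Dual K (V i)) (dualSystem f · · ·) where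
  map_self i g := by simp [dualSystem, hf_id]
  map_map k j i hij hjk g := by
    rw [dualSystem, dualSystem, dualSystem, ← LinearMap.comp_apply,
      LinearMap.dualMap_comp_dualMap, hf_comp]

variable [DecidableEq ι]

abbrev DualDirectLimit : Type _ := Module.DirectLimit (fun i ↦ Dual K (V i)) (dualSystem f)

variable [∀ i, FiniteDimensional K (V i)]

noncomputable def threadOfDual (φ : Dual K (DualDirectLimit f)) (j : ι) : V j :=
  (evalEquiv K (V j)).symm (φ ∘ₗ Module.DirectLimit.of K ι _ (dualSystem f) j)

variable {f}

@[simp]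
theorem apply_threadOfDual (φ : Dual K (DualDirectLimit f)) (j : ι) (g : Dual K (V j)) :
    g (threadOfDual f φ j) = φ (Module.DirectLimit.of K ι _ (dualSystem f) j g) := by
  simp [threadOfDual]

theorem map_threadOfDual (φ : Dual K (DualDirectLimit f)) (j k : ι) (h : j ≤ k) :
    f j k h (threadOfDual f φ k) = threadOfDual f φ j := by
  apply (evalEquiv K (V j)).injective
  ext g
  rw [evalEquiv_apply, evalEquiv_apply, Dual.eval_apply, Dual.eval_apply,
    ← LinearMap.dualMap_apply, apply_threadOfDual, apply_threadOfDual]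
  exact congrArg φ Module.DirectLimit.of_f

end InverseSystem

/-- For an inverse system of finite-dimensional vector spaces over a directed set
with surjective transition maps, every canonical projection from the inverse limit
is surjective: for each `i` and `v : V i` there is a compatible family hitting `v`. -/
theorem stmt_1
    {K : Type*} [Field K] {I : Type*} [Preorder I] [IsDirected I (· ≤ ·)]
    (V : I → Type*) [∀ i, AddCommGroup (V i)] [∀ i, Module K (V i)]
    [∀ i, FiniteDimensional K (V i)]
    (f : ∀ i j, i ≤ j → V j →ₗ[K] V i)
    (hf_id : ∀ i, f i i le_rfl = LinearMap.id)
    (hf_comp : ∀ i j k (hij : i ≤ j) (hjk : j ≤ k),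
      (f i j hij).comp (f j k hjk) = f i k (hij.trans hjk))
    (hf_surj : ∀ i j (h : i ≤ j), Function.Surjective (f i j h)) :
    ∀ i, ∀ v : V i, ∃ x : ∀ j, V j,
      (∀ j k (h : j ≤ k), f j k h (x k) = x j) ∧ x i = v := by
  intro i v
  classical
  have := directedSystem_dualSystem f hf_id hf_comp
  have hinj := Module.DirectLimit.of_injective (g := dualSystem f)
    (fun j k h ↦ LinearMap.dualMap_injective_of_surjective (hf_surj j k h)) i
  obtain ⟨r, hr⟩ := LinearMap.exists_leftInverse_of_injective
    (V' := DualDirectLimit f) _ (LinearMap.ker_eq_bot.2 hinj)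
  refine ⟨threadOfDual f (Dual.eval K (V i) v ∘ₗ r), map_threadOfDual _, ?_⟩
  apply (evalEquiv K (V i)).injective
  ext g
  simp [← LinearMap.comp_apply (f := r), hr]
end

section
/- Let K be a field, V a K-vector space, and S₁, S₂ subspaces of V. Inside the symmetric algebra Sym(V), the intersection of the subalgebras generated by S₁ and by S₂ equals the subalgebra generated by S₁ ∩ S₂; that is, Sym(S₁) ∩ Sym(S₂) = Sym(S₁ ∩ S₂) as subalgebras of Sym(V). -/
/-!
Take a basis of `S₁ ⊓ S₂` and extend it to bases `b₁` of `S₁` and `b₂` of `S₂`; then `b₁ ∪ b₂`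
is still linearly independent, and `span (b₁ ∩ b₂) = S₁ ⊓ S₂`. Extend `b₁ ∪ b₂` to a basis `B` of
the linear forms. A linear change of variables carries the variables onto `B`, so `B` is
algebraically independent, and for an algebraically independent set the subalgebras generated by
two subsets intersect in the subalgebra generated by their intersection, just as polynomials in
the variables `T₁` and in the variables `T₂` are polynomials in the variables `T₁ ∩ T₂`.
-/

open MvPolynomial Set Submodule

section AlgebraicIndependent

variable {R A : Type*} [CommRing R] [CommRing A] [Algebra R A]

theorem AlgebraicIndependent.adjoin_image_inf_adjoin_image {ι : Type*} {x : ι → A}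
    (hx : AlgebraicIndependent R x) (t₁ t₂ : Set ι) :
    Algebra.adjoin R (x '' t₁) ⊓ Algebra.adjoin R (x '' t₂) =
      Algebra.adjoin R (x '' (t₁ ∩ t₂)) := by
  have adjoin_image (t : Set ι) : Algebra.adjoin R (x '' t) = (supported R t).map (aeval x) := by
    rw [supported_eq_adjoin_X, AlgHom.map_adjoin, ← image_comp]
    congr
    ext
    simp
  rw [adjoin_image, adjoin_image, adjoin_image, ← Algebra.map_inf _ hx]
  congr 1
  ext p
  simp [mem_supported, subset_inter_iff]

theorem AlgebraicIndepOn.adjoin_inf_adjoin {B b₁ b₂ : Set A} (hB : AlgebraicIndepOn R id B)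
    (h₁ : b₁ ⊆ B) (h₂ : b₂ ⊆ B) :
    Algebra.adjoin R b₁ ⊓ Algebra.adjoin R b₂ = Algebra.adjoin R (b₁ ∩ b₂) := by
  have image_preimage {b : Set A} (hb : b ⊆ B) : ((↑) : B → A) '' ((↑) ⁻¹' b) = b := by
    rw [Subtype.image_preimage_coe, inter_eq_self_of_subset_right hb]
  simpa only [id_eq, ← preimage_inter, image_preimage h₁, image_preimage h₂,
    image_preimage (inter_subset_left.trans h₁)] using
    hB.adjoin_image_inf_adjoin_image ((↑) ⁻¹' b₁) ((↑) ⁻¹' b₂)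

end AlgebraicIndependent

section LinearAlgebra

variable {K M : Type*} [DivisionRing K] [AddCommGroup M] [Module K M]

theorem LinearIndepOn.exists_superset_span_eq {s : Set M} {S : Submodule K M}
    (hs : LinearIndepOn K id s) (hsS : s ⊆ S) :
    ∃ b, s ⊆ b ∧ span K b = S ∧ LinearIndepOn K id b := by
  obtain ⟨b, hbS, hsb, hSb, hb⟩ := exists_linearIndepOn_id_extension hs hsS
  exact ⟨b, hsb, le_antisymm (span_le.2 hbS) (by simpa using span_le.2 hSb), hb⟩

theorem Submodule.exists_linearIndepOn_union_span_eq_inf (S₁ S₂ : Submodule K M) :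
    ∃ b₁ b₂ : Set M, LinearIndepOn K id (b₁ ∪ b₂) ∧ span K b₁ = S₁ ∧ span K b₂ = S₂ ∧
      span K (b₁ ∩ b₂) = S₁ ⊓ S₂ := by
  obtain ⟨b₀, hb₀S, hspan₀, hb₀⟩ :=
    exists_linearIndependent K ((S₁ ⊓ S₂ : Submodule K M) : Set M)
  rw [span_eq] at hspan₀
  obtain ⟨b₁, hb₀₁, hspan₁, hb₁⟩ :=
    LinearIndepOn.exists_superset_span_eq hb₀ (hb₀S.trans fun _ hx ↦ hx.1)
  obtain ⟨b₂, hb₀₂, hspan₂, hb₂⟩ :=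
    LinearIndepOn.exists_superset_span_eq hb₀ (hb₀S.trans fun _ hx ↦ hx.2)
  refine ⟨b₁, b₂, ?_, hspan₁, hspan₂, le_antisymm ?_ ?_⟩
  · have hdisj₀ : Disjoint (span K b₀) (span K (b₂ \ b₁)) :=
      ((linearIndepOn_id_union_iff (disjoint_sdiff_right.mono_left hb₀₁)).1
        (hb₂.mono (union_subset hb₀₂ sdiff_subset))).2.2
    have hdisj : Disjoint (span K b₁) (span K (b₂ \ b₁)) := by
      refine disjoint_def.2 fun v hv₁ hv₂ ↦ disjoint_def.1 hdisj₀ v ?_ hv₂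
      rw [hspan₀, mem_inf, ← hspan₁, ← hspan₂]
      exact ⟨hv₁, span_mono sdiff_subset hv₂⟩
    rw [← union_sdiff_self]
    exact hb₁.id_union (hb₂.mono sdiff_subset) hdisj
  · rw [← hspan₁, ← hspan₂]
    exact le_inf (span_mono inter_subset_left) (span_mono inter_subset_right)
  · rw [← hspan₀]
    exact span_mono (subset_inter hb₀₁ hb₀₂)

end LinearAlgebra

namespace MvPolynomial

variable {K σ : Type*} [Field K]

local notation "V" => span K (range (X : σ → MvPolynomial σ K))

theorem aeval_eq_of_mem_span_X {A : Type*} [CommRing A] [Algebra K A] (ψ : V →ₗ[K] A)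
    {p : MvPolynomial σ K} (hp : p ∈ V) :
    aeval (fun i ↦ ψ ⟨X i, subset_span (mem_range_self i)⟩) p = ψ ⟨p, hp⟩ := by
  induction hp using span_induction with
  | mem x hx =>
    obtain ⟨i, rfl⟩ := hx
    rw [aeval_X]
  | zero => simp only [map_zero]; exact (map_zero ψ).symm
  | add x y hx hy ihx ihy =>
    rw [map_add, ihx, ihy, ← map_add]
    rfl
  | smul a x hx ih =>
    rw [map_smul, ih, ← map_smul]
    rfl

theorem algebraicIndepOn_of_span_eq_span_X {B : Set (MvPolynomial σ K)}
    (hB : LinearIndepOn K id B) (hspan : span K B = V) : AlgebraicIndepOn K id B := by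
  let bX : Module.Basis σ K V := .span (linearIndependent_X σ K)
  let bB : Module.Basis B K V := (Module.Basis.span (v := ((↑) : B → MvPolynomial σ K)) hB).map
    (LinearEquiv.ofEq _ _ (by rw [Subtype.range_coe, hspan]))
  have hbB (j : B) : (bB j : MvPolynomial σ K) = j := by
    simp only [bB, Module.Basis.map_apply, LinearEquiv.coe_ofEq_apply]
    exact congrArg Subtype.val (Module.Basis.span_apply (v := ((↑) : B → MvPolynomial σ K)) hB j)
  let e : B ≃ σ := bB.indexEquiv bX
  -- The change of variables `X i ↦ e.symm i` is inverted by the substitution induced by `φ⁻¹`.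
  let φ : V ≃ₗ[K] V := bX.equiv bB e.symm
  let Φ : MvPolynomial σ K →ₐ[K] MvPolynomial σ K := aeval fun i ↦ (e.symm i : MvPolynomial σ K)
  let ψ : V →ₗ[K] MvPolynomial σ K := Submodule.subtype V ∘ₗ φ.symm.toLinearMap
  let Ψ : MvPolynomial σ K →ₐ[K] MvPolynomial σ K :=
    aeval fun i ↦ ψ ⟨X i, subset_span (mem_range_self i)⟩
  have hΨΦ : Ψ.comp Φ = AlgHom.id K _ := by
    refine algHom_ext fun i ↦ ?_
    have hφ : φ (bX i) = bB (e.symm i) := bX.equiv_apply i bB e.symm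
    rw [AlgHom.comp_apply, aeval_X, ← hbB, aeval_eq_of_mem_span_X ψ (bB (e.symm i)).2]
    simp [ψ, ← hφ, bX]
  have hΦ : Function.Injective Φ := Function.LeftInverse.injective (g := Ψ) fun p ↦ by
    rw [← AlgHom.comp_apply, hΨΦ, AlgHom.id_apply]
  convert ((algebraicIndependent_X σ K).map' hΦ).comp e e.injective using 1
  ext j
  simp [Φ]

end MvPolynomial

/-- Inside the symmetric algebra `Sym(V)` on a `K`-vector space `V` — realized as the
polynomial algebra `MvPolynomial σ K` on a basis `σ` of `V`, with `V` identified with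
the linear span of the variables — for subspaces `S₁, S₂ ⊆ V` one has
`Sym(S₁) ∩ Sym(S₂) = Sym(S₁ ∩ S₂)`, where `Sym(S)` is the subalgebra generated by `S`. -/
theorem stmt_2 {K : Type*} [Field K] (σ : Type*)
    (S₁ S₂ : Submodule K (MvPolynomial σ K))
    (h₁ : S₁ ≤ Submodule.span K (Set.range (MvPolynomial.X : σ → MvPolynomial σ K)))
    (h₂ : S₂ ≤ Submodule.span K (Set.range (MvPolynomial.X : σ → MvPolynomial σ K))) :
    Algebra.adjoin K (S₁ : Set (MvPolynomial σ K)) ⊓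
        Algebra.adjoin K (S₂ : Set (MvPolynomial σ K)) =
      Algebra.adjoin K ((S₁ ⊓ S₂ : Submodule K (MvPolynomial σ K)) : Set (MvPolynomial σ K)) := by
  obtain ⟨b₁, b₂, hb, hspan₁, hspan₂, hspan₁₂⟩ := S₁.exists_linearIndepOn_union_span_eq_inf S₂
  have hb₁₂ : b₁ ∪ b₂ ⊆ span K (range (X : σ → MvPolynomial σ K)) :=
    union_subset (fun _ hx ↦ h₁ (hspan₁ ▸ subset_span hx))
      (fun _ hx ↦ h₂ (hspan₂ ▸ subset_span hx))
  obtain ⟨B, hbB, hspanB, hB⟩ := hb.exists_superset_span_eq hb₁₂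
  rw [← hspan₁₂, ← hspan₁, ← hspan₂, Algebra.adjoin_span, Algebra.adjoin_span,
    Algebra.adjoin_span]
  exact (algebraicIndepOn_of_span_eq_span_X hB hspanB).adjoin_inf_adjoin
    (subset_union_left.trans hbB) (subset_union_right.trans hbB)
end

section
/- Let G be a nilpotent group, with lower central series G = G¹ ⊇ G² ⊇ ⋯ ⊇ Gⁿ⁺¹ = {e}, such that each quotient Gʳ/Gʳ⁺¹ is a uniquely divisible abelian group (i.e., a ℚ-vector space). Then G itself is uniquely divisible: for every positive integer p the map g ↦ gᵖ is a bijection of G. -/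
/-!
Work one layer of a central series `H` at a time. Modulo `H (r + 1)` an element of `H r` is
central, so `(c * b) ^ p = c ^ p * b ^ p` there. Hence if `a ^ p = b ^ p` and `a * b⁻¹ ∈ H r`,
then `(a * b⁻¹) ^ p ∈ H (r + 1)`, and unique roots in `H r / H (r + 1)` push `a * b⁻¹` into
`H (r + 1)`; likewise a root of `g` modulo `H r` is corrected by a root in `H r / H (r + 1)` to
a root modulo `H (r + 1)`. Reaching `H n = ⊥` gives injectivity and surjectivity of `g ↦ g ^ p`.
-/

open scoped commutatorElement

namespace Subgroup

variable {G : Type*} [Group G] {p : ℕ}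

section Step

variable {K N : Subgroup G} [N.Normal]

theorem commute_mk_of_commutatorElement_mem {c x : G} (h : ⁅c, x⁆ ∈ N) :
    Commute (c : G ⧸ N) (x : G ⧸ N) := by
  rw [← commutatorElement_eq_one_iff_commute, ← QuotientGroup.mk'_apply,
    ← QuotientGroup.mk'_apply, ← map_commutatorElement, QuotientGroup.mk'_apply,
    QuotientGroup.eq_one_iff]
  exact h

theorem mem_of_pow_mem_of_injective_pow
    (hinj : Function.Injective fun x : K ⧸ N.subgroupOf K => x ^ p) {c : G} (hc : c ∈ K)
    (hcp : c ^ p ∈ N) : c ∈ N := by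
  have : ((⟨c, hc⟩ : K) : K ⧸ N.subgroupOf K) ^ p = 1 ^ p := by
    rw [one_pow, ← QuotientGroup.mk_pow, QuotientGroup.eq_one_iff]
    exact hcp
  simpa [QuotientGroup.eq_one_iff, mem_subgroupOf] using hinj this

variable (hKN : ∀ c ∈ K, ∀ g : G, ⁅c, g⁆ ∈ N)
include hKN

theorem mul_inv_mem_of_pow_eq_of_injective_pow
    (hinj : Function.Injective fun x : K ⧸ N.subgroupOf K => x ^ p) {a b : G}
    (hab : a ^ p = b ^ p) (hK : a * b⁻¹ ∈ K) : a * b⁻¹ ∈ N := by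
  refine mem_of_pow_mem_of_injective_pow hinj hK ?_
  have hsplit : (a : G ⧸ N) ^ p = ((a * b⁻¹ : G) : G ⧸ N) ^ p * (b : G ⧸ N) ^ p := by
    rw [← (commute_mk_of_commutatorElement_mem (hKN _ hK b)).mul_pow, ← QuotientGroup.mk_mul,
      inv_mul_cancel_right]
  rw [← QuotientGroup.mk_pow, ← QuotientGroup.mk_pow, hab, QuotientGroup.mk_pow] at hsplit
  rw [← QuotientGroup.eq_one_iff, QuotientGroup.mk_pow]
  exact mul_eq_right.mp hsplit.symm

theorem exists_pow_mul_inv_mem_of_surjective_pow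
    (hsurj : Function.Surjective fun x : K ⧸ N.subgroupOf K => x ^ p) {g h : G}
    (hK : h ^ p * g⁻¹ ∈ K) : ∃ h' : G, h' ^ p * g⁻¹ ∈ N := by
  obtain ⟨y, hy⟩ := hsurj ((⟨h ^ p * g⁻¹, hK⟩ : K) : K ⧸ N.subgroupOf K)⁻¹
  obtain ⟨d, rfl⟩ := QuotientGroup.mk_surjective y
  have hd : (d : G) ^ p * (h ^ p * g⁻¹) ∈ N := by
    simp only at hy
    rw [← QuotientGroup.mk_pow, eq_inv_iff_mul_eq_one, ← QuotientGroup.mk_mul,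
      QuotientGroup.eq_one_iff, mem_subgroupOf] at hy
    exact hy
  refine ⟨d * h, ?_⟩
  rw [← QuotientGroup.eq_one_iff] at hd ⊢
  calc (((d * h) ^ p * g⁻¹ : G) : G ⧸ N)
      = ((d : G) : G ⧸ N) ^ p * ((h : G ⧸ N) ^ p * (g : G ⧸ N)⁻¹) := by
        rw [QuotientGroup.mk_mul, QuotientGroup.mk_pow, QuotientGroup.mk_mul,
          (commute_mk_of_commutatorElement_mem (hKN _ d.2 h)).mul_pow, mul_assoc,
          QuotientGroup.mk_inv]
    _ = 1 := by simpa using hd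

end Step

namespace IsDescendingCentralSeries

variable {H : ℕ → Subgroup G} [∀ r, (H r).Normal]

theorem mul_inv_mem_of_pow_eq (hH : IsDescendingCentralSeries H)
    (hinj : ∀ r, Function.Injective fun x : H r ⧸ (H (r + 1)).subgroupOf (H r) => x ^ p)
    {a b : G} (hab : a ^ p = b ^ p) (r : ℕ) : a * b⁻¹ ∈ H r := by
  induction r with
  | zero => simp [hH.1]
  | succ r ih => exact mul_inv_mem_of_pow_eq_of_injective_pow (hH.2 · r) (hinj r) hab ih

theorem exists_pow_mul_inv_mem (hH : IsDescendingCentralSeries H)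
    (hsurj : ∀ r, Function.Surjective fun x : H r ⧸ (H (r + 1)).subgroupOf (H r) => x ^ p)
    (g : G) (r : ℕ) : ∃ h : G, h ^ p * g⁻¹ ∈ H r := by
  induction r with
  | zero => exact ⟨g, by simp [hH.1]⟩
  | succ r ih =>
    obtain ⟨h, hh⟩ := ih
    exact exists_pow_mul_inv_mem_of_surjective_pow (hH.2 · r) (hsurj r) hh

theorem bijective_pow (hH : IsDescendingCentralSeries H) {n : ℕ} (hn : H n = ⊥)
    (hp : ∀ r, Function.Bijective fun x : H r ⧸ (H (r + 1)).subgroupOf (H r) => x ^ p) :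
    Function.Bijective fun g : G => g ^ p := by
  refine ⟨fun a b hab => ?_, fun g => ?_⟩
  · simpa [hn, mul_inv_eq_one] using hH.mul_inv_mem_of_pow_eq (fun r => (hp r).1) hab n
  · obtain ⟨h, hh⟩ := hH.exists_pow_mul_inv_mem (fun r => (hp r).2) g n
    exact ⟨h, by simpa [hn, mul_inv_eq_one] using hh⟩

end IsDescendingCentralSeries

end Subgroup

theorem stmt_11_general {G : Type*} [Group G] (n : ℕ)
    (hnilp : (⊤ : Subgroup G).lowerCentralSeries n = ⊥)
    (hq : ∀ r : ℕ, ∀ p : ℕ, 0 < p →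
      Function.Bijective
        (fun x : (⊤ : Subgroup G).lowerCentralSeries r ⧸
            (((⊤ : Subgroup G).lowerCentralSeries (r + 1)).subgroupOf ((⊤ : Subgroup G).lowerCentralSeries r)) =>
          x ^ p)) :
    ∀ p : ℕ, 0 < p → Function.Bijective (fun g : G => g ^ p) :=
  fun p hp => Subgroup.lowerCentralSeries_isDescendingCentralSeries.bijective_pow hnilp (hq · p hp)

/-- A nilpotent group whose lower central series quotients `Gʳ/Gʳ⁺¹` are all
uniquely divisible (abelian) groups is itself uniquely divisible.  Here
`Gʳ = lowerCentralSeries G (r-1)` (Mathlib's series starts with `G¹ = G` at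
index `0`), and `Gⁿ⁺¹ = {e}`. -/
theorem stmt_11 {G : Type*} [Group G] (n : ℕ)
    (hnilp : (⊤ : Subgroup G).lowerCentralSeries n = ⊥)
    (habel : ∀ r : ℕ,
      ∀ x y : (⊤ : Subgroup G).lowerCentralSeries r ⧸
          (((⊤ : Subgroup G).lowerCentralSeries (r + 1)).subgroupOf ((⊤ : Subgroup G).lowerCentralSeries r)),
        x * y = y * x)
    (hq : ∀ r : ℕ, ∀ p : ℕ, 0 < p →
      Function.Bijective
        (fun x : (⊤ : Subgroup G).lowerCentralSeries r ⧸
            (((⊤ : Subgroup G).lowerCentralSeries (r + 1)).subgroupOf ((⊤ : Subgroup G).lowerCentralSeries r)) =>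
          x ^ p)) :
    ∀ p : ℕ, 0 < p → Function.Bijective (fun g : G => g ^ p) :=
  stmt_11_general n hnilp hq
end
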